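/- arXiv:1801.01587 — 5 statements merged into one kernel-verified Lean document; each statement's English description precedes it below -/
import Mathlib

section
/- Let n ≥ 4 be even, y ∈ ℝⁿ a vector with Σᵢ yᵢ = 0 and ‖y‖ = 1, and let {1,…,n} = S ∪ T be a balanced partition with |S| = |T| = n/2. Define Δ_S = max{yᵢ − yⱼ : i,j ∈ S}, Δ_T = max{yᵢ − yⱼ : i,j ∈ T}, and Δ = max(Δ_S, Δ_T). Assume (wlog) that the mean of y over S is negative. If Δ < 1/√(2n), then max{yᵢ : i ∈ S} < 0 < min{yᵢ : i ∈ T}. -/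
/-- Auxiliary: on a group `A` of size `n/2` with spread `D`, every entry is
within `D` of the group mean, and the sum of squares over `A` is at most
`(n/2) D² + (n/2) m²` where `m` is the group mean. -/
lemma stmt_6_aux (n : ℕ) (hn : 0 < n) (y : Fin n → ℝ) (A : Finset (Fin n))
    (hcard : 2 * A.card = n) (D : ℝ)
    (hD : IsGreatest {d : ℝ | ∃ i ∈ A, ∃ j ∈ A, d = y i - y j} D) :
    0 ≤ D ∧
    (∀ i ∈ A, |y i - (2 / (n : ℝ)) * ∑ j ∈ A, y j| ≤ D) ∧
    (∑ i ∈ A, (y i) ^ 2 ≤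
      ((n : ℝ) / 2) * D ^ 2 + ((n : ℝ) / 2) * ((2 / (n : ℝ)) * ∑ j ∈ A, y j) ^ 2) := by
  have hnR : (0 : ℝ) < (n : ℝ) := by exact_mod_cast hn
  have hcR : (A.card : ℝ) = (n : ℝ) / 2 := by
    have : ((2 * A.card : ℕ) : ℝ) = (n : ℝ) := by exact_mod_cast congrArg (Nat.cast (R := ℝ)) hcard
    push_cast at this; linarith
  set m : ℝ := (2 / (n : ℝ)) * ∑ j ∈ A, y j with hm
  have hs : ∑ j ∈ A, y j = ((n : ℝ) / 2) * m := by
    rw [hm]; field_simp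
  have hApos : 0 < A.card := by omega
  obtain ⟨i0, hi0⟩ := Finset.card_pos.mp hApos
  have hD0 : 0 ≤ D := hD.2 ⟨i0, hi0, i0, hi0, by ring⟩
  have hub : ∀ i ∈ A, y i - m ≤ D ∧ m - y i ≤ D := by
    intro i hi
    have h1 : ∑ j ∈ A, (y i - y j) ≤ A.card * D := by
      calc ∑ j ∈ A, (y i - y j) ≤ ∑ j ∈ A, D :=
            Finset.sum_le_sum (fun j hj => hD.2 ⟨i, hi, j, hj, rfl⟩)
        _ = A.card * D := by rw [Finset.sum_const, nsmul_eq_mul]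
    have h2 : ∑ j ∈ A, (y j - y i) ≤ A.card * D := by
      calc ∑ j ∈ A, (y j - y i) ≤ ∑ j ∈ A, D :=
            Finset.sum_le_sum (fun j hj => hD.2 ⟨j, hj, i, hi, rfl⟩)
        _ = A.card * D := by rw [Finset.sum_const, nsmul_eq_mul]
    have e1 : ∑ j ∈ A, (y i - y j) = ((n : ℝ) / 2) * y i - ((n : ℝ) / 2) * m := by
      rw [Finset.sum_sub_distrib, Finset.sum_const, nsmul_eq_mul, hcR, hs]
    have e2 : ∑ j ∈ A, (y j - y i) = ((n : ℝ) / 2) * m - ((n : ℝ) / 2) * y i := by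
      rw [Finset.sum_sub_distrib, Finset.sum_const, nsmul_eq_mul, hcR, hs]
    rw [e1, hcR] at h1
    rw [e2, hcR] at h2
    constructor <;> nlinarith
  have habs : ∀ i ∈ A, |y i - m| ≤ D := fun i hi =>
    abs_le.mpr ⟨by linarith [(hub i hi).2], (hub i hi).1⟩
  refine ⟨hD0, habs, ?_⟩
  have key : ∀ i ∈ A, (y i) ^ 2 = (y i - m) ^ 2 + 2 * m * y i - m ^ 2 := by
    intro i _; ring
  have hsq : ∀ i ∈ A, (y i - m) ^ 2 ≤ D ^ 2 := by
    intro i hi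
    exact sq_le_sq' (by linarith [(hub i hi).2]) (hub i hi).1
  have hsum1 : ∑ i ∈ A, (y i) ^ 2
      = (∑ i ∈ A, (y i - m) ^ 2) + 2 * m * (((n : ℝ) / 2) * m) - ((n : ℝ) / 2) * m ^ 2 := by
    rw [Finset.sum_congr rfl key, Finset.sum_sub_distrib, Finset.sum_add_distrib,
      ← Finset.mul_sum, Finset.sum_const, nsmul_eq_mul, hcR, hs]
  have hsum2 : ∑ i ∈ A, (y i - m) ^ 2 ≤ ((n : ℝ) / 2) * D ^ 2 := by
    calc ∑ i ∈ A, (y i - m) ^ 2 ≤ ∑ i ∈ A, D ^ 2 := Finset.sum_le_sum hsq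
      _ = ((n : ℝ) / 2) * D ^ 2 := by rw [Finset.sum_const, nsmul_eq_mul, hcR]
  rw [hsum1]; nlinarith

/-- Separation lemma. If `y` sums to zero, has unit norm, the
within-group spread `Δ` of a balanced partition `S ∪ T` satisfies
`Δ < 1/√(2n)`, and the mean of `y` over `S` is negative, then all entries of
`y` on `S` are negative and all entries on `T` are positive. -/
theorem stmt_6 (n : ℕ) (hn : 4 ≤ n) (hev : Even n)
    (y : Fin n → ℝ)
    (hsum : ∑ i, y i = 0) (hnorm : ∑ i, (y i) ^ 2 = 1)
    (S T : Finset (Fin n))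
    (hdisj : Disjoint S T) (hunion : S ∪ T = Finset.univ)
    (hScard : 2 * S.card = n) (hTcard : 2 * T.card = n)
    (ΔS ΔT Δ : ℝ)
    (hΔS : IsGreatest {d : ℝ | ∃ i ∈ S, ∃ j ∈ S, d = y i - y j} ΔS)
    (hΔT : IsGreatest {d : ℝ | ∃ i ∈ T, ∃ j ∈ T, d = y i - y j} ΔT)
    (hΔ : Δ = max ΔS ΔT)
    (hmean : (2 / (n : ℝ)) * ∑ i ∈ S, y i < 0)
    (hsmall : Δ < 1 / Real.sqrt (2 * n)) :
    (∀ i ∈ S, y i < 0) ∧ (∀ j ∈ T, 0 < y j) := by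
  have hnpos : 0 < n := by omega
  have hnR : (0 : ℝ) < (n : ℝ) := by exact_mod_cast hnpos
  obtain ⟨hDS0, hSdev, hSsum⟩ := stmt_6_aux n hnpos y S hScard ΔS hΔS
  obtain ⟨hDT0, hTdev, hTsum⟩ := stmt_6_aux n hnpos y T hTcard ΔT hΔT
  set mS : ℝ := (2 / (n : ℝ)) * ∑ i ∈ S, y i with hmS
  set mT : ℝ := (2 / (n : ℝ)) * ∑ i ∈ T, y i with hmT
  -- split sums over the partition
  have hsplit : ∀ f : Fin n → ℝ, ∑ i ∈ S, f i + ∑ i ∈ T, f i = ∑ i, f i := by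
    intro f
    rw [← Finset.sum_union hdisj, hunion]
  have hsumST : ∑ i ∈ S, y i + ∑ i ∈ T, y i = 0 := by rw [hsplit]; exact hsum
  have hmTeq : mT = -mS := by
    rw [hmS, hmT, ← mul_neg]; congr 1; linarith
  have hnormST : ∑ i ∈ S, (y i) ^ 2 + ∑ i ∈ T, (y i) ^ 2 = 1 := by
    rw [hsplit]; exact hnorm
  -- Δ bounds
  have hΔS_le : ΔS ≤ Δ := hΔ ▸ le_max_left _ _
  have hΔT_le : ΔT ≤ Δ := hΔ ▸ le_max_right _ _
  have hΔ0 : 0 ≤ Δ := le_trans hDS0 hΔS_le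
  -- Δ² < 1/(2n)
  have h2n : (0 : ℝ) < 2 * (n : ℝ) := by linarith
  have hsq2n : (1 / Real.sqrt (2 * (n : ℝ))) ^ 2 = 1 / (2 * (n : ℝ)) := by
    rw [div_pow, one_pow, Real.sq_sqrt (le_of_lt h2n)]
  have hΔsq : Δ ^ 2 < 1 / (2 * (n : ℝ)) := by
    rw [← hsq2n]
    exact pow_lt_pow_left₀ hsmall hΔ0 two_ne_zero
  -- combine the two sum bounds
  have h1 : (1 : ℝ) ≤ (n : ℝ) * Δ ^ 2 + (n : ℝ) * mS ^ 2 := by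
    have hS2 : ΔS ^ 2 ≤ Δ ^ 2 := pow_le_pow_left₀ hDS0 hΔS_le 2
    have hT2 : ΔT ^ 2 ≤ Δ ^ 2 := pow_le_pow_left₀ hDT0 hΔT_le 2
    have hmT2 : mT ^ 2 = mS ^ 2 := by rw [hmTeq]; ring
    have hhalf : (0 : ℝ) ≤ (n : ℝ) / 2 := by linarith
    have hS2' : ((n : ℝ) / 2) * ΔS ^ 2 ≤ ((n : ℝ) / 2) * Δ ^ 2 :=
      mul_le_mul_of_nonneg_left hS2 hhalf
    have hT2' : ((n : ℝ) / 2) * ΔT ^ 2 ≤ ((n : ℝ) / 2) * Δ ^ 2 :=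
      mul_le_mul_of_nonneg_left hT2 hhalf
    rw [hmT2] at hTsum
    linarith [hSsum, hTsum, hnormST, hS2', hT2']
  -- deduce -mS > Δ
  have hinv : (2 * (n : ℝ)) * (1 / (2 * (n : ℝ))) = 1 := by field_simp
  have h2nΔ : 2 * (n : ℝ) * Δ ^ 2 < 1 := by
    have := mul_lt_mul_of_pos_left hΔsq h2n
    rwa [hinv] at this
  have hmS2 : 1 / (2 * (n : ℝ)) < mS ^ 2 := by
    rw [div_lt_iff₀ h2n]; linarith [h1, h2nΔ]
  have hkey : Δ < -mS := by
    have hm2 : Δ ^ 2 < mS ^ 2 := lt_trans hΔsq hmS2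
    nlinarith [hm2, hmean, hΔ0, sq_nonneg (Δ + mS)]
  constructor
  · intro i hi
    have := abs_le.mp (hSdev i hi)
    have : y i - mS ≤ ΔS := this.2
    linarith [hΔS_le, hkey]
  · intro j hj
    have hdev := abs_le.mp (hTdev j hj)
    have : -ΔT ≤ y j - mT := hdev.1
    have : mT - ΔT ≤ y j := by linarith
    rw [hmTeq] at this
    linarith [hΔT_le, hkey]
end

section
/- Let y ∈ ℝⁿ with Σᵢ yᵢ = 0 and ‖y‖ = 1, and let S ∪ T be a balanced partition of {1,…,n}. With Δ = max(Δ_S, Δ_T) as the maximum within-group spread of the entries of y, and m_S = (2/n)Σ_{i∈S} yᵢ, one has m_S² ≥ (1 − nΔ²)/n. -/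
/-- With `y` summing to zero of unit norm, `S ∪ T` a balanced
partition, `Δ` the maximum within-group spread, and `m_S = (2/n) Σ_{i∈S} y i`,
one has `m_S² ≥ (1 − nΔ²)/n`. -/
theorem stmt_7 (n : ℕ) (hn : 4 ≤ n) (hev : Even n)
    (y : Fin n → ℝ)
    (hsum : ∑ i, y i = 0) (hnorm : ∑ i, (y i) ^ 2 = 1)
    (S T : Finset (Fin n))
    (hdisj : Disjoint S T) (hunion : S ∪ T = Finset.univ)
    (hScard : 2 * S.card = n) (hTcard : 2 * T.card = n)
    (ΔS ΔT Δ : ℝ)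
    (hΔS : IsGreatest {d : ℝ | ∃ i ∈ S, ∃ j ∈ S, d = y i - y j} ΔS)
    (hΔT : IsGreatest {d : ℝ | ∃ i ∈ T, ∃ j ∈ T, d = y i - y j} ΔT)
    (hΔ : Δ = max ΔS ΔT) :
    (1 - n * Δ ^ 2) / n ≤ ((2 / (n : ℝ)) * ∑ i ∈ S, y i) ^ 2 := by
  set N : ℝ := (n : ℝ) with hN
  have hn0 : (0:ℝ) < N := by
    rw [hN]
    have : (4:ℝ) ≤ (n:ℝ) := by exact_mod_cast hn
    linarith
  set m : ℝ := (2 / N) * ∑ i ∈ S, y i with hm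
  have hScardR : (S.card : ℝ) = N / 2 := by
    have : ((2 * S.card : ℕ) : ℝ) = (n:ℝ) := by exact_mod_cast congrArg (Nat.cast : ℕ → ℝ) hScard
    push_cast at this; rw [hN]; linarith
  have hTcardR : (T.card : ℝ) = N / 2 := by
    have : ((2 * T.card : ℕ) : ℝ) = (n:ℝ) := by exact_mod_cast congrArg (Nat.cast : ℕ → ℝ) hTcard
    push_cast at this; rw [hN]; linarith
  have hsumS : ∑ i ∈ S, y i = (N / 2) * m := by
    rw [hm]; field_simp
  have hsplit : ∀ f : Fin n → ℝ, ∑ i, f i = ∑ i ∈ S, f i + ∑ i ∈ T, f i := by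
    intro f
    rw [← Finset.sum_union hdisj, hunion]
  have hsumT : ∑ i ∈ T, y i = -((N / 2) * m) := by
    have := hsplit y
    rw [hsum, hsumS] at this
    linarith
  -- nonnegativity of ΔS, ΔT
  have hΔS0 : 0 ≤ ΔS := by
    obtain ⟨i, hi, j, hj, _⟩ := hΔS.1
    have h0 : (0:ℝ) ∈ {d : ℝ | ∃ i ∈ S, ∃ j ∈ S, d = y i - y j} := ⟨i, hi, i, hi, by ring⟩
    exact hΔS.2 h0
  have hΔT0 : 0 ≤ ΔT := by
    obtain ⟨i, hi, j, hj, _⟩ := hΔT.1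
    have h0 : (0:ℝ) ∈ {d : ℝ | ∃ i ∈ T, ∃ j ∈ T, d = y i - y j} := ⟨i, hi, i, hi, by ring⟩
    exact hΔT.2 h0
  have hΔ0 : 0 ≤ Δ := by rw [hΔ]; exact le_trans hΔS0 (le_max_left _ _)
  -- per-element deviation bounds
  have hdevS : ∀ i ∈ S, (y i - m) ^ 2 ≤ Δ ^ 2 := by
    intro i hi
    have hub : ∀ j ∈ S, y i - y j ≤ ΔS := fun j hj => hΔS.2 ⟨i, hi, j, hj, rfl⟩
    have hlb : ∀ j ∈ S, -ΔS ≤ y i - y j := by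
      intro j hj
      have := hΔS.2 ⟨j, hj, i, hi, rfl⟩
      linarith
    have hsum1 : ∑ j ∈ S, (y i - y j) ≤ S.card * ΔS := by
      calc ∑ j ∈ S, (y i - y j) ≤ ∑ j ∈ S, ΔS := Finset.sum_le_sum hub
        _ = S.card * ΔS := by rw [Finset.sum_const, nsmul_eq_mul]
    have hsum2 : -(S.card * ΔS) ≤ ∑ j ∈ S, (y i - y j) := by
      calc -((S.card : ℝ) * ΔS) = ∑ j ∈ S, (-ΔS) := by rw [Finset.sum_const, nsmul_eq_mul]; ring
        _ ≤ ∑ j ∈ S, (y i - y j) := Finset.sum_le_sum hlb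
    have hexp : ∑ j ∈ S, (y i - y j) = (S.card : ℝ) * y i - ∑ j ∈ S, y j := by
      rw [Finset.sum_sub_distrib, Finset.sum_const, nsmul_eq_mul]
    have hmi : y i - m = (2 / N) * ∑ j ∈ S, (y i - y j) := by
      rw [hexp, hScardR, hsumS, hm]; field_simp
    have h1 : y i - m ≤ ΔS := by
      rw [hmi]
      have : (2 / N) * ∑ j ∈ S, (y i - y j) ≤ (2 / N) * (S.card * ΔS) := by
        apply mul_le_mul_of_nonneg_left hsum1 (by positivity)
      rw [hScardR] at this
      calc (2 / N) * ∑ j ∈ S, (y i - y j) ≤ (2 / N) * (N / 2 * ΔS) := this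
        _ = ΔS := by field_simp
    have h2 : -ΔS ≤ y i - m := by
      rw [hmi]
      have : (2 / N) * (-(S.card * ΔS)) ≤ (2 / N) * ∑ j ∈ S, (y i - y j) := by
        apply mul_le_mul_of_nonneg_left hsum2 (by positivity)
      rw [hScardR] at this
      calc -ΔS = (2 / N) * (-(N / 2 * ΔS)) := by field_simp
        _ ≤ _ := this
    have hΔSΔ : ΔS ≤ Δ := by rw [hΔ]; exact le_max_left _ _
    have habs : |y i - m| ≤ Δ := abs_le.2 ⟨by linarith, by linarith⟩
    calc (y i - m) ^ 2 = |y i - m| ^ 2 := (sq_abs _).symm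
      _ ≤ Δ ^ 2 := by apply pow_le_pow_left₀ (abs_nonneg _) habs
  have hdevT : ∀ i ∈ T, (y i + m) ^ 2 ≤ Δ ^ 2 := by
    intro i hi
    have hub : ∀ j ∈ T, y i - y j ≤ ΔT := fun j hj => hΔT.2 ⟨i, hi, j, hj, rfl⟩
    have hlb : ∀ j ∈ T, -ΔT ≤ y i - y j := by
      intro j hj
      have := hΔT.2 ⟨j, hj, i, hi, rfl⟩
      linarith
    have hsum1 : ∑ j ∈ T, (y i - y j) ≤ T.card * ΔT := by
      calc ∑ j ∈ T, (y i - y j) ≤ ∑ j ∈ T, ΔT := Finset.sum_le_sum hub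
        _ = T.card * ΔT := by rw [Finset.sum_const, nsmul_eq_mul]
    have hsum2 : -(T.card * ΔT) ≤ ∑ j ∈ T, (y i - y j) := by
      calc -((T.card : ℝ) * ΔT) = ∑ j ∈ T, (-ΔT) := by rw [Finset.sum_const, nsmul_eq_mul]; ring
        _ ≤ ∑ j ∈ T, (y i - y j) := Finset.sum_le_sum hlb
    have hexp : ∑ j ∈ T, (y i - y j) = (T.card : ℝ) * y i - ∑ j ∈ T, y j := by
      rw [Finset.sum_sub_distrib, Finset.sum_const, nsmul_eq_mul]
    have hmi : y i + m = (2 / N) * ∑ j ∈ T, (y i - y j) := by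
      rw [hexp, hTcardR, hsumT]; field_simp; ring
    have h1 : y i + m ≤ ΔT := by
      rw [hmi]
      have : (2 / N) * ∑ j ∈ T, (y i - y j) ≤ (2 / N) * (T.card * ΔT) := by
        apply mul_le_mul_of_nonneg_left hsum1 (by positivity)
      rw [hTcardR] at this
      calc (2 / N) * ∑ j ∈ T, (y i - y j) ≤ (2 / N) * (N / 2 * ΔT) := this
        _ = ΔT := by field_simp
    have h2 : -ΔT ≤ y i + m := by
      rw [hmi]
      have : (2 / N) * (-(T.card * ΔT)) ≤ (2 / N) * ∑ j ∈ T, (y i - y j) := by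
        apply mul_le_mul_of_nonneg_left hsum2 (by positivity)
      rw [hTcardR] at this
      calc -ΔT = (2 / N) * (-(N / 2 * ΔT)) := by field_simp
        _ ≤ _ := this
    have hΔTΔ : ΔT ≤ Δ := by rw [hΔ]; exact le_max_right _ _
    have habs : |y i + m| ≤ Δ := abs_le.2 ⟨by linarith, by linarith⟩
    calc (y i + m) ^ 2 = |y i + m| ^ 2 := (sq_abs _).symm
      _ ≤ Δ ^ 2 := by apply pow_le_pow_left₀ (abs_nonneg _) habs
  -- decomposition of the norm
  have hdecS : ∑ i ∈ S, (y i) ^ 2 = ∑ i ∈ S, (y i - m) ^ 2 + (N / 2) * m ^ 2 := by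
    have : ∑ i ∈ S, (y i - m) ^ 2 =
        ∑ i ∈ S, (y i) ^ 2 - 2 * m * ∑ i ∈ S, y i + S.card * m ^ 2 := by
      rw [Finset.mul_sum]
      rw [show ∑ i ∈ S, (y i - m)^2 = ∑ i ∈ S, ((y i)^2 - 2 * m * y i + m^2) by
        apply Finset.sum_congr rfl; intros; ring]
      rw [Finset.sum_add_distrib, Finset.sum_sub_distrib, Finset.sum_const, nsmul_eq_mul]
    rw [this, hsumS, hScardR]; ring
  have hdecT : ∑ i ∈ T, (y i) ^ 2 = ∑ i ∈ T, (y i + m) ^ 2 + (N / 2) * m ^ 2 := by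
    have : ∑ i ∈ T, (y i + m) ^ 2 =
        ∑ i ∈ T, (y i) ^ 2 + 2 * m * ∑ i ∈ T, y i + T.card * m ^ 2 := by
      rw [Finset.mul_sum]
      rw [show ∑ i ∈ T, (y i + m)^2 = ∑ i ∈ T, ((y i)^2 + 2 * m * y i + m^2) by
        apply Finset.sum_congr rfl; intros; ring]
      rw [Finset.sum_add_distrib, Finset.sum_add_distrib, Finset.sum_const, nsmul_eq_mul]
    rw [this, hsumT, hTcardR]; ring
  have hboundS : ∑ i ∈ S, (y i - m) ^ 2 ≤ (N / 2) * Δ ^ 2 := by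
    calc ∑ i ∈ S, (y i - m) ^ 2 ≤ ∑ i ∈ S, Δ ^ 2 := Finset.sum_le_sum hdevS
      _ = S.card * Δ ^ 2 := by rw [Finset.sum_const, nsmul_eq_mul]
      _ = (N / 2) * Δ ^ 2 := by rw [hScardR]
  have hboundT : ∑ i ∈ T, (y i + m) ^ 2 ≤ (N / 2) * Δ ^ 2 := by
    calc ∑ i ∈ T, (y i + m) ^ 2 ≤ ∑ i ∈ T, Δ ^ 2 := Finset.sum_le_sum hdevT
      _ = T.card * Δ ^ 2 := by rw [Finset.sum_const, nsmul_eq_mul]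
      _ = (N / 2) * Δ ^ 2 := by rw [hTcardR]
  have hone : (1 : ℝ) = ∑ i ∈ S, (y i)^2 + ∑ i ∈ T, (y i)^2 := by
    rw [← hsplit fun i => (y i)^2, hnorm]
  have hkey : (1 : ℝ) ≤ N * Δ ^ 2 + N * m ^ 2 := by
    rw [hone, hdecS, hdecT]
    linarith
  rw [div_le_iff₀ hn0]
  show 1 - N * Δ ^ 2 ≤ m ^ 2 * N
  nlinarith [hkey]
end

section
/- Let G = (X, W) be an (α,β)-separated graph on n ≥ 4 vertices with balanced partition X = S ∪ T, and let y* minimize f(y) = Σ_{i,j} W_{i,j}(yᵢ − yⱼ)² subject to 𝟙ᵀy = 0 and ‖y‖ = 1. Let Δ be the maximum over the two groups of the spread of the entries of y* within a group. Then (α/β)Δ² ≤ n²/2. -/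
/-- Within-group path connectivity: any two vertices of `A` are joined by a
path inside `A` along which every consecutive pair has affinity at least `α`. -/
def PathConn (n : ℕ) (W : Matrix (Fin n) (Fin n) ℝ) (A : Finset (Fin n)) (α : ℝ) : Prop :=
  ∀ i ∈ A, ∀ j ∈ A, ∃ (l : ℕ) (p : ℕ → Fin n),
    p 0 = i ∧ p l = j ∧ (∀ t ≤ l, p t ∈ A) ∧ ∀ t < l, α ≤ W (p t) (p (t + 1))

/-- An `(α,β)`-separated graph: a balanced partition `S ∪ T` of the vertices,
within-group path connectivity with affinities `≥ α`, and cross-group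
affinities `≤ β`, with `α > β ≥ 0`. -/
def SepGraph (n : ℕ) (W : Matrix (Fin n) (Fin n) ℝ) (S T : Finset (Fin n)) (α β : ℝ) : Prop :=
  0 ≤ β ∧ β < α ∧ Disjoint S T ∧ S ∪ T = Finset.univ ∧
  2 * S.card = n ∧ 2 * T.card = n ∧
  PathConn n W S α ∧ PathConn n W T α ∧
  ∀ i ∈ S, ∀ j ∈ T, W i j ≤ β


/-- Path shortening: any path can be replaced by an injective (simple) path. -/
lemma shorten_path {n : ℕ} (W : Matrix (Fin n) (Fin n) ℝ) (A : Finset (Fin n))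
    (α : ℝ) (i j : Fin n) :
    ∀ l (p : ℕ → Fin n), p 0 = i → p l = j → (∀ t ≤ l, p t ∈ A) →
      (∀ t < l, α ≤ W (p t) (p (t + 1))) →
      ∃ l', ∃ p' : ℕ → Fin n, p' 0 = i ∧ p' l' = j ∧ (∀ t ≤ l', p' t ∈ A) ∧
        (∀ t < l', α ≤ W (p' t) (p' (t + 1))) ∧ Set.InjOn p' (Set.Iic l') := by
  intro l
  induction l using Nat.strong_induction_on with
  | _ l ih =>
    intro p h0 hl hmem hedge
    by_cases hinj : Set.InjOn p (Set.Iic l)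
    · exact ⟨l, p, h0, hl, hmem, hedge, hinj⟩
    · rw [Set.InjOn] at hinj
      push_neg at hinj
      obtain ⟨s, hs, t, ht, hpst, hne⟩ := hinj
      simp only [Set.mem_Iic] at hs ht
      have main : ∀ s t : ℕ, s < t → t ≤ l → p s = p t →
          ∃ l', ∃ p' : ℕ → Fin n, p' 0 = i ∧ p' l' = j ∧ (∀ u ≤ l', p' u ∈ A) ∧
            (∀ u < l', α ≤ W (p' u) (p' (u + 1))) ∧ Set.InjOn p' (Set.Iic l') := by
        clear hpst hs ht
        intro s t hst ht hpst
        set q : ℕ → Fin n := fun u => if u < s then p u else p (u + (t - s)) with hq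
        have key : ∀ u, q u = if u < s then p u else p (u + (t - s)) := fun u => rfl
        refine ih (l - (t - s)) (by omega) q ?_ ?_ ?_ ?_
        · rw [key]
          split
          · exact h0
          · have : s = 0 := by omega
            subst this
            simpa using hpst.symm.trans h0
        · rw [key]
          have h1 : ¬ (l - (t - s) < s) := by omega
          rw [if_neg h1]
          have : l - (t - s) + (t - s) = l := by omega
          rw [this]; exact hl
        · intro u hu
          rw [key]
          split
          · exact hmem u (by omega)
          · exact hmem _ (by omega)
        · intro u hu
          rw [key, key]
          rcases lt_trichotomy (u + 1) s with h1 | h1 | h1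
          · rw [if_pos (by omega), if_pos h1]
            exact hedge u (by omega)
          · rw [if_pos (by omega), if_neg (by omega)]
            have : u + 1 + (t - s) = t := by omega
            rw [this, ← hpst, ← h1]
            exact hedge u (by omega)
          · rw [if_neg (by omega), if_neg (by omega)]
            have : u + (t - s) + 1 = u + 1 + (t - s) := by omega
            rw [← this]
            exact hedge _ (by omega)

      rcases hne.lt_or_gt with h | h
      · exact main s t h ht hpst
      · exact main t s h hs hpst.symm

/-- Cauchy–Schwarz spread bound along a simple path. -/
lemma spread_bound {n : ℕ} (W : Matrix (Fin n) (Fin n) ℝ) (hsym : W.IsSymm)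
    (hnn : ∀ i j, 0 ≤ W i j) (A : Finset (Fin n)) {α : ℝ} (hα : 0 < α)
    (hconn : PathConn n W A α) (y : Fin n → ℝ) {i j : Fin n} (hi : i ∈ A) (hj : j ∈ A) :
    2 * α * (y i - y j) ^ 2 ≤ (A.card : ℝ) * ∑ i, ∑ j, W i j * (y i - y j) ^ 2 := by
  obtain ⟨l0, p0, h00, hl0, hmem0, hedge0⟩ := hconn i hi j hj
  obtain ⟨l, p, h0, hl, hmem, hedge, hinj⟩ :=
    shorten_path W A α i j l0 p0 h00 hl0 hmem0 hedge0
  set F : ℝ := ∑ i, ∑ j, W i j * (y i - y j) ^ 2 with hF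
  have hF0 : 0 ≤ F := by
    apply Finset.sum_nonneg; intro a _; apply Finset.sum_nonneg; intro b _
    exact mul_nonneg (hnn a b) (sq_nonneg _)
  set d : ℕ → ℝ := fun t => y (p t) - y (p (t + 1)) with hd
  -- cardinality bound
  have hcard : (l : ℝ) ≤ (A.card : ℝ) := by
    have : l + 1 ≤ A.card := by
      have := Finset.card_le_card_of_injOn p
        (s := Finset.range (l + 1)) (t := A)
        (fun a ha => hmem a (by simpa using Nat.lt_succ_iff.mp (Finset.mem_range.mp ha)))
        (hinj.mono (by intro a ha; simp at ha ⊢; omega))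
      simpa using this
    exact_mod_cast Nat.le_of_succ_le (by omega : Nat.succ l ≤ A.card)
  -- telescoping
  have tel : y i - y j = ∑ t ∈ Finset.range l, d t := by
    rw [Finset.sum_range_sub' (fun t => y (p t)) l, h0, hl]
  -- Cauchy–Schwarz
  have CS : (y i - y j) ^ 2 ≤ (l : ℝ) * ∑ t ∈ Finset.range l, d t ^ 2 := by
    rw [tel]
    simpa using sq_sum_le_card_mul_sum_sq (s := Finset.range l) (f := d)
  have hd2 : 0 ≤ ∑ t ∈ Finset.range l, d t ^ 2 :=
    Finset.sum_nonneg fun t _ => sq_nonneg _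
  -- edge weights
  have hedge2 : α * ∑ t ∈ Finset.range l, d t ^ 2
      ≤ ∑ t ∈ Finset.range l, W (p t) (p (t + 1)) * d t ^ 2 := by
    rw [Finset.mul_sum]
    exact Finset.sum_le_sum fun t ht =>
      mul_le_mul_of_nonneg_right (hedge t (Finset.mem_range.mp ht)) (sq_nonneg _)
  -- doubling: distinct directed edges inject into all ordered pairs
  have double : 2 * ∑ t ∈ Finset.range l, W (p t) (p (t + 1)) * d t ^ 2 ≤ F := by
    set g : Fin n × Fin n → ℝ := fun q => W q.1 q.2 * (y q.1 - y q.2) ^ 2 with hg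
    have hFg : F = ∑ q : Fin n × Fin n, g q := by
      rw [hF, ← Finset.univ_product_univ, Finset.sum_product]
    set E1 : Finset (Fin n × Fin n) :=
      (Finset.range l).image (fun t => (p t, p (t + 1))) with hE1
    set E2 : Finset (Fin n × Fin n) :=
      (Finset.range l).image (fun t => (p (t + 1), p t)) with hE2
    have hmemIic : ∀ t < l, p t = p (t + 1) → False := by
      intro t ht h
      have := hinj (Set.mem_Iic.mpr (by omega)) (Set.mem_Iic.mpr (by omega)) h
      omega
    have hdisj : Disjoint E1 E2 := by
      rw [Finset.disjoint_left]
      intro q hq1 hq2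
      simp only [hE1, hE2, Finset.mem_image, Finset.mem_range] at hq1 hq2
      obtain ⟨s, hs, hqs⟩ := hq1
      obtain ⟨t, ht, hqt⟩ := hq2
      have heq := hqs.trans hqt.symm
      have h1 : p s = p (t + 1) := (Prod.ext_iff.mp heq).1
      have h2 : p (s + 1) = p t := (Prod.ext_iff.mp heq).2
      have e1 : s = t + 1 := hinj (Set.mem_Iic.mpr (by omega)) (Set.mem_Iic.mpr (by omega)) h1
      have e2 : s + 1 = t := hinj (Set.mem_Iic.mpr (by omega)) (Set.mem_Iic.mpr (by omega)) h2
      omega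
    have hinj1 : Set.InjOn (fun t => (p t, p (t + 1))) (Finset.range l : Set ℕ) := by
      intro s hs t ht h
      simp only [Finset.coe_range, Set.mem_Iio] at hs ht
      have := (Prod.ext_iff.mp h).1
      exact hinj (Set.mem_Iic.mpr (by omega)) (Set.mem_Iic.mpr (by omega)) this
    have hinj2 : Set.InjOn (fun t => (p (t + 1), p t)) (Finset.range l : Set ℕ) := by
      intro s hs t ht h
      simp only [Finset.coe_range, Set.mem_Iio] at hs ht
      have := (Prod.ext_iff.mp h).2
      exact hinj (Set.mem_Iic.mpr (by omega)) (Set.mem_Iic.mpr (by omega)) this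
    have hs1 : ∑ q ∈ E1, g q = ∑ t ∈ Finset.range l, W (p t) (p (t + 1)) * d t ^ 2 :=
      Finset.sum_image fun s hs t ht h => hinj1 (by simpa using hs) (by simpa using ht) h
    have hs2 : ∑ q ∈ E2, g q = ∑ t ∈ Finset.range l, W (p t) (p (t + 1)) * d t ^ 2 := by
      rw [Finset.sum_image fun s hs t ht h => hinj2 (by simpa using hs) (by simpa using ht) h]
      refine Finset.sum_congr rfl fun t ht => ?_
      simp only [hg, hd]
      rw [hsym.apply]
      ring
    have hsub : ∑ q ∈ E1 ∪ E2, g q ≤ ∑ q : Fin n × Fin n, g q :=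
      Finset.sum_le_sum_of_subset_of_nonneg (Finset.subset_univ _)
        (fun q _ _ => mul_nonneg (hnn q.1 q.2) (sq_nonneg _))
    rw [Finset.sum_union hdisj, hs1, hs2] at hsub
    rw [hFg]; linarith
  have hWd : 0 ≤ ∑ t ∈ Finset.range l, W (p t) (p (t + 1)) * d t ^ 2 :=
    Finset.sum_nonneg fun t _ => mul_nonneg (hnn _ _) (sq_nonneg _)
  calc 2 * α * (y i - y j) ^ 2
      ≤ 2 * α * ((l : ℝ) * ∑ t ∈ Finset.range l, d t ^ 2) := by
        have := mul_le_mul_of_nonneg_left CS (by linarith : (0:ℝ) ≤ 2 * α)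
        linarith
    _ = (l : ℝ) * (2 * (α * ∑ t ∈ Finset.range l, d t ^ 2)) := by ring
    _ ≤ (l : ℝ) * (2 * ∑ t ∈ Finset.range l, W (p t) (p (t + 1)) * d t ^ 2) := by
        apply mul_le_mul_of_nonneg_left (by linarith) (Nat.cast_nonneg l)
    _ ≤ (l : ℝ) * F := mul_le_mul_of_nonneg_left double (Nat.cast_nonneg l)
    _ ≤ (A.card : ℝ) * F := mul_le_mul_of_nonneg_right hcard hF0

/-- For an `(α,β)`-separated graph on `n ≥ 4` vertices, the
minimizer `y*` of `f(y) = Σ_{i,j} W i j (y i − y j)²` subject to `𝟙ᵀy = 0`,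
`‖y‖ = 1` has within-group spread `Δ` satisfying `(α/β) Δ² ≤ n²/2`. -/
theorem stmt_11 (n : ℕ) (hn : 4 ≤ n)
    (W : Matrix (Fin n) (Fin n) ℝ) (hsym : W.IsSymm) (hnn : ∀ i j, 0 ≤ W i j)
    (S T : Finset (Fin n)) (α β : ℝ)
    (hsep : SepGraph n W S T α β)
    (y : Fin n → ℝ)
    (hsum : ∑ i, y i = 0) (hnorm : ∑ i, (y i) ^ 2 = 1)
    (hopt : ∀ z : Fin n → ℝ, (∑ i, z i = 0) → (∑ i, (z i) ^ 2 = 1) →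
      ∑ i, ∑ j, W i j * (y i - y j) ^ 2 ≤ ∑ i, ∑ j, W i j * (z i - z j) ^ 2)
    (ΔS ΔT Δ : ℝ)
    (hΔS : IsGreatest {d : ℝ | ∃ i ∈ S, ∃ j ∈ S, d = y i - y j} ΔS)
    (hΔT : IsGreatest {d : ℝ | ∃ i ∈ T, ∃ j ∈ T, d = y i - y j} ΔT)
    (hΔ : Δ = max ΔS ΔT) :
    (α / β) * Δ ^ 2 ≤ (n : ℝ) ^ 2 / 2 := by
  obtain ⟨hβ0, hβα, hdisj, hunion, hScard, hTcard, hconnS, hconnT, hcross⟩ := hsep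
  have hα : 0 < α := hβ0.trans_lt hβα
  have hnR : (0:ℝ) < n := by
    have : 0 < n := by omega
    exact_mod_cast this
  -- test vector
  set a : ℝ := (Real.sqrt n)⁻¹ with ha
  have ha2 : a ^ 2 = (n : ℝ)⁻¹ := by rw [ha, inv_pow, Real.sq_sqrt hnR.le]
  set z : Fin n → ℝ := fun i => if i ∈ S then a else -a with hz
  have hzS : ∀ i ∈ S, z i = a := fun i hi => if_pos hi
  have hzT : ∀ i ∈ T, z i = -a := fun i hi => if_neg (Finset.disjoint_right.mp hdisj hi)
  have hST : S.card = T.card := by omega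
  have hsplit : ∀ f : Fin n → ℝ, ∑ i, f i = (∑ i ∈ S, f i) + ∑ i ∈ T, f i := by
    intro f; rw [← hunion, Finset.sum_union hdisj]
  have hsum_z : ∑ i, z i = 0 := by
    rw [hsplit, Finset.sum_congr rfl hzS, Finset.sum_congr rfl hzT,
      Finset.sum_const, Finset.sum_const, hST]
    simp
  have hnorm_z : ∑ i, (z i) ^ 2 = 1 := by
    have : ∀ i, (z i) ^ 2 = a ^ 2 := by
      intro i; by_cases h : i ∈ S <;> simp [hz, h]
    rw [Finset.sum_congr rfl fun i _ => this i, Finset.sum_const, Finset.card_univ,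
      Fintype.card_fin, nsmul_eq_mul, ha2]
    exact mul_inv_cancel₀ hnR.ne'
  -- upper bound on F(z)
  have hcS : (S.card : ℝ) = (n : ℝ) / 2 := by
    have h2 : ((2 * S.card : ℕ) : ℝ) = ((n : ℕ) : ℝ) := by exact_mod_cast hScard
    push_cast at h2; linarith
  have hcT : (T.card : ℝ) = (n : ℝ) / 2 := by
    have h2 : ((2 * T.card : ℕ) : ℝ) = ((n : ℕ) : ℝ) := by exact_mod_cast hTcard
    push_cast at h2; linarith
  have hSS : ∑ i ∈ S, ∑ j ∈ S, W i j * (z i - z j) ^ 2 = 0 :=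
    Finset.sum_eq_zero fun i hi => Finset.sum_eq_zero fun j hj => by
      rw [hzS i hi, hzS j hj]; ring
  have hTT : ∑ i ∈ T, ∑ j ∈ T, W i j * (z i - z j) ^ 2 = 0 :=
    Finset.sum_eq_zero fun i hi => Finset.sum_eq_zero fun j hj => by
      rw [hzT i hi, hzT j hj]; ring
  have hbound : ∀ (i j : Fin n), W i j ≤ β → W i j * (z i - z j) ^ 2 ≤ β * (4 * a ^ 2) := by
    intro i j hW
    have h1 : (z i - z j) ^ 2 ≤ 4 * a ^ 2 := by
      by_cases hiS : i ∈ S <;> by_cases hjS : j ∈ S <;> simp [hz, hiS, hjS] <;> nlinarith [sq_nonneg a]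
    calc W i j * (z i - z j) ^ 2 ≤ β * (z i - z j) ^ 2 :=
          mul_le_mul_of_nonneg_right hW (sq_nonneg _)
      _ ≤ β * (4 * a ^ 2) := mul_le_mul_of_nonneg_left h1 hβ0
  have hSTb : ∑ i ∈ S, ∑ j ∈ T, W i j * (z i - z j) ^ 2
      ≤ (S.card : ℝ) * (T.card : ℝ) * (β * (4 * a ^ 2)) := by
    calc ∑ i ∈ S, ∑ j ∈ T, W i j * (z i - z j) ^ 2
        ≤ ∑ i ∈ S, ∑ j ∈ T, β * (4 * a ^ 2) :=
          Finset.sum_le_sum fun i hi => Finset.sum_le_sum fun j hj =>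
            hbound i j (hcross i hi j hj)
      _ = (S.card : ℝ) * (T.card : ℝ) * (β * (4 * a ^ 2)) := by
          rw [Finset.sum_const, Finset.sum_const]; push_cast [nsmul_eq_mul]; ring
  have hTSb : ∑ i ∈ T, ∑ j ∈ S, W i j * (z i - z j) ^ 2
      ≤ (S.card : ℝ) * (T.card : ℝ) * (β * (4 * a ^ 2)) := by
    calc ∑ i ∈ T, ∑ j ∈ S, W i j * (z i - z j) ^ 2
        ≤ ∑ i ∈ T, ∑ j ∈ S, β * (4 * a ^ 2) :=
          Finset.sum_le_sum fun i hi => Finset.sum_le_sum fun j hj =>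
            hbound i j (by rw [← hsym.apply]; exact hcross j hj i hi)
      _ = (S.card : ℝ) * (T.card : ℝ) * (β * (4 * a ^ 2)) := by
          rw [Finset.sum_const, Finset.sum_const]; push_cast [nsmul_eq_mul]; ring
  have hFz : ∑ i, ∑ j, W i j * (z i - z j) ^ 2 ≤ 2 * β * n := by
    rw [hsplit]
    have e1 : ∑ i ∈ S, ∑ j, W i j * (z i - z j) ^ 2
        = (∑ i ∈ S, ∑ j ∈ S, W i j * (z i - z j) ^ 2)
          + ∑ i ∈ S, ∑ j ∈ T, W i j * (z i - z j) ^ 2 := by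
      rw [← Finset.sum_add_distrib]
      exact Finset.sum_congr rfl fun i _ => hsplit _
    have e2 : ∑ i ∈ T, ∑ j, W i j * (z i - z j) ^ 2
        = (∑ i ∈ T, ∑ j ∈ S, W i j * (z i - z j) ^ 2)
          + ∑ i ∈ T, ∑ j ∈ T, W i j * (z i - z j) ^ 2 := by
      rw [← Finset.sum_add_distrib]
      exact Finset.sum_congr rfl fun i _ => hsplit _
    rw [e1, e2, hSS, hTT]
    have hval : (S.card : ℝ) * (T.card : ℝ) * (β * (4 * a ^ 2)) = β * n := by
      rw [hcS, hcT, ha2]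
      field_simp
      ring
    rw [hval] at hSTb hTSb
    linarith
  have hFy : ∑ i, ∑ j, W i j * (y i - y j) ^ 2 ≤ 2 * β * n :=
    (hopt z hsum_z hnorm_z).trans hFz
  have hFy0 : 0 ≤ ∑ i, ∑ j, W i j * (y i - y j) ^ 2 :=
    Finset.sum_nonneg fun i _ => Finset.sum_nonneg fun j _ =>
      mul_nonneg (hnn i j) (sq_nonneg _)
  -- lower bounds
  obtain ⟨iS, hiS, jS, hjS, hSeq⟩ := hΔS.1
  obtain ⟨iT, hiT, jT, hjT, hTeq⟩ := hΔT.1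
  have hLS : 2 * α * ΔS ^ 2 ≤ ((n : ℝ) / 2) * ∑ i, ∑ j, W i j * (y i - y j) ^ 2 := by
    rw [hSeq, ← hcS]
    exact spread_bound W hsym hnn S hα hconnS y hiS hjS
  have hLT : 2 * α * ΔT ^ 2 ≤ ((n : ℝ) / 2) * ∑ i, ∑ j, W i j * (y i - y j) ^ 2 := by
    rw [hTeq, ← hcT]
    exact spread_bound W hsym hnn T hα hconnT y hiT hjT
  have key : 2 * α * Δ ^ 2 ≤ β * (n : ℝ) ^ 2 := by
    have hmul : ((n : ℝ) / 2) * ∑ i, ∑ j, W i j * (y i - y j) ^ 2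
        ≤ ((n : ℝ) / 2) * (2 * β * n) :=
      mul_le_mul_of_nonneg_left hFy (by linarith)
    have heq : ((n : ℝ) / 2) * (2 * β * n) = β * (n : ℝ) ^ 2 := by ring
    rcases max_choice ΔS ΔT with h | h <;> rw [hΔ, h] <;> linarith
  rcases eq_or_lt_of_le hβ0 with hβ | hβ
  · rw [← hβ, div_zero, zero_mul]
    positivity
  · rw [div_mul_eq_mul_div, div_le_div_iff₀ hβ (by norm_num : (0:ℝ) < 2)]
    linarith only [key]
end

section
/- Let G = (X, W) be an (α,β)-separated graph on n ≥ 4 vertices. Any vector y satisfying 𝟙ᵀy = 0, ‖y‖ = 1 and the bound f(y) ≤ nβ has within-group spread Δ satisfying 2Δ²α/n ≤ nβ, i.e., Δ² ≤ n²β/(2α). -/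
/-- Shorten a walk to one with pairwise-distinct vertices. -/
lemma shorten_walk {n : ℕ} (W : Matrix (Fin n) (Fin n) ℝ) (A : Finset (Fin n)) (α : ℝ) :
    ∀ (l : ℕ) (p : ℕ → Fin n), (∀ t ≤ l, p t ∈ A) → (∀ t < l, α ≤ W (p t) (p (t + 1))) →
    ∃ (l' : ℕ) (q : ℕ → Fin n), q 0 = p 0 ∧ q l' = p l ∧ (∀ t ≤ l', q t ∈ A) ∧
      (∀ t < l', α ≤ W (q t) (q (t + 1))) ∧
      (∀ s ≤ l', ∀ t ≤ l', q s = q t → s = t) := by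
  intro l
  induction l using Nat.strong_induction_on with
  | _ l ih =>
    intro p hmem hedge
    by_cases hinj : ∀ s ≤ l, ∀ t ≤ l, p s = p t → s = t
    · exact ⟨l, p, rfl, rfl, hmem, hedge, hinj⟩
    · push_neg at hinj
      obtain ⟨s, hs, t, ht, hpe, hne⟩ := hinj
      -- WLOG s < t
      wlog hst : s < t generalizing s t
      · exact this t ht s hs hpe.symm (Ne.symm hne) (lt_of_le_of_ne (le_of_not_gt hst) (Ne.symm hne))
      set d := t - s with hd
      have hd0 : 0 < d := Nat.sub_pos_of_lt hst
      have hdl : d ≤ l := le_trans (Nat.sub_le t s) ht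
      set q : ℕ → Fin n := fun u => if u ≤ s then p u else p (u + d) with hq
      have hlen : l - d < l := Nat.sub_lt (lt_of_lt_of_le (lt_of_le_of_lt (Nat.zero_le s) hst) ht) hd0
      have hsd : s + d = t := by omega
      have hq0 : q 0 = p 0 := by simp [hq]
      have hql : q (l - d) = p l := by
        by_cases h : l - d ≤ s
        · have : l = t := by omega
          have : l - d = s := by omega
          rw [hq]; simp only [this, if_pos le_rfl]
          rw [hpe]; congr 1; omega
        · rw [hq]; simp only [if_neg h]; congr 1; omega
      have hmem' : ∀ u ≤ l - d, q u ∈ A := by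
        intro u hu
        rw [hq]; dsimp only
        split
        · exact hmem u (by omega)
        · exact hmem _ (by omega)
      have hedge' : ∀ u < l - d, α ≤ W (q u) (q (u + 1)) := by
        intro u hu
        rw [hq]; dsimp only
        by_cases h1 : u + 1 ≤ s
        · rw [if_pos (by omega), if_pos h1]
          exact hedge u (by omega)
        · by_cases h2 : u ≤ s
          · have hus : u = s := by omega
            rw [if_pos h2, if_neg h1, hus, hpe]
            have : s + 1 + d = t + 1 := by omega
            rw [this]
            exact hedge t (by omega)
          · rw [if_neg h2, if_neg (by omega)]
            have : u + 1 + d = u + d + 1 := by omega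
            rw [this]
            exact hedge (u + d) (by omega)
      obtain ⟨l'', r, h0, hl2, hm, he, hi2⟩ := ih (l - d) hlen q hmem' hedge'
      exact ⟨l'', r, h0.trans hq0, hl2.trans hql, hm, he, hi2⟩

/-- Key estimate: for `i j` in a path-connected half, `2 (yᵢ-yⱼ)² α ≤ n f(y)`. -/
lemma key_est {n : ℕ} (W : Matrix (Fin n) (Fin n) ℝ) (hnn : ∀ i j, 0 ≤ W i j)
    (A : Finset (Fin n)) (α : ℝ) (hα : 0 < α) (hPC : PathConn n W A α)
    (hcard : 2 * A.card = n) (y : Fin n → ℝ) (i j : Fin n) (hi : i ∈ A) (hj : j ∈ A) :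
    2 * (y i - y j) ^ 2 * α ≤ n * ∑ a, ∑ b, W a b * (y a - y b) ^ 2 := by
  obtain ⟨l, p, hp0, hpl, hmem, hedge⟩ := hPC i hi j hj
  obtain ⟨l', q, hq0, hql, hmem', hedge', hinj⟩ := shorten_walk W A α l p hmem hedge
  set f := ∑ a, ∑ b, W a b * (y a - y b) ^ 2 with hf
  have hf0 : 0 ≤ f := Finset.sum_nonneg fun a _ => Finset.sum_nonneg fun b _ => mul_nonneg (hnn a b) (sq_nonneg _)
  -- telescoping
  have htel : y i - y j = ∑ t ∈ Finset.range l', (y (q t) - y (q (t + 1))) := by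
    rw [Finset.sum_range_sub' (fun t => y (q t))]
    rw [hq0, hql, hp0, hpl]
  -- Cauchy–Schwarz
  have hCS : (y i - y j) ^ 2 ≤ l' * ∑ t ∈ Finset.range l', (y (q t) - y (q (t + 1))) ^ 2 := by
    rw [htel]
    have := sq_sum_le_card_mul_sum_sq (s := Finset.range l')
      (f := fun t => y (q t) - y (q (t + 1)))
    simpa using this
  -- sum of weighted squares along walk ≤ f
  have hsub : ∑ t ∈ Finset.range l', W (q t) (q (t + 1)) * (y (q t) - y (q (t + 1))) ^ 2 ≤ f := by
    have hinj' : Set.InjOn (fun t => (q t, q (t + 1))) (Finset.range l') := by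
      intro a ha b hb hab
      simp only [Finset.coe_range, Set.mem_Iio] at ha hb
      have := congrArg Prod.fst hab
      exact hinj a (by omega) b (by omega) this
    calc ∑ t ∈ Finset.range l', W (q t) (q (t + 1)) * (y (q t) - y (q (t + 1))) ^ 2
        = ∑ e ∈ (Finset.range l').image (fun t => (q t, q (t + 1))),
            W e.1 e.2 * (y e.1 - y e.2) ^ 2 := by
          rw [Finset.sum_image (fun a ha b hb h => hinj' (Finset.mem_coe.mpr ha) (Finset.mem_coe.mpr hb) h)]
      _ ≤ ∑ e ∈ (Finset.univ : Finset (Fin n × Fin n)), W e.1 e.2 * (y e.1 - y e.2) ^ 2 := by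
          apply Finset.sum_le_sum_of_subset_of_nonneg (Finset.subset_univ _)
          intro e _ _; have := hnn e.1 e.2; positivity
      _ = f := by rw [hf, ← Finset.sum_product']; rfl
  have hαsum : α * ∑ t ∈ Finset.range l', (y (q t) - y (q (t + 1))) ^ 2 ≤ f := by
    calc α * ∑ t ∈ Finset.range l', (y (q t) - y (q (t + 1))) ^ 2
        = ∑ t ∈ Finset.range l', α * (y (q t) - y (q (t + 1))) ^ 2 := Finset.mul_sum _ _ _
      _ ≤ ∑ t ∈ Finset.range l', W (q t) (q (t + 1)) * (y (q t) - y (q (t + 1))) ^ 2 :=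
          Finset.sum_le_sum fun t ht => by
            have := hedge' t (Finset.mem_range.mp ht)
            nlinarith [sq_nonneg (y (q t) - y (q (t + 1)))]
      _ ≤ f := hsub
  -- l' bound
  have hl' : l' + 1 ≤ A.card := by
    have : (Finset.range (l' + 1)).card ≤ A.card := by
      apply Finset.card_le_card_of_injOn q
      · intro t ht; exact hmem' t (by simpa using Nat.lt_succ_iff.mp (Finset.mem_range.mp ht))
      · intro a ha b hb hab
        simp only [Finset.coe_range, Set.mem_Iio, Nat.lt_succ_iff] at ha hb
        exact hinj a ha b hb hab
    simpa using this
  have h2l : (2 * l' : ℝ) ≤ n := by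
    have : 2 * l' + 2 ≤ n := by omega
    push_cast
    exact_mod_cast le_trans (by omega : 2 * l' ≤ 2 * l' + 2) this
  have hsq0 : 0 ≤ ∑ t ∈ Finset.range l', (y (q t) - y (q (t + 1))) ^ 2 :=
    Finset.sum_nonneg fun t _ => sq_nonneg _
  calc 2 * (y i - y j) ^ 2 * α
      ≤ 2 * (l' * ∑ t ∈ Finset.range l', (y (q t) - y (q (t + 1))) ^ 2) * α := by
        nlinarith [hCS, hα.le, hsq0, sq_nonneg (y i - y j)]
    _ = (2 * l') * (α * ∑ t ∈ Finset.range l', (y (q t) - y (q (t + 1))) ^ 2) := by ring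
    _ ≤ n * f := mul_le_mul h2l hαsum (mul_nonneg hα.le hsq0) (Nat.cast_nonneg n)

/-- For an `(α,β)`-separated graph on `n ≥ 4` vertices, any `y`
with `𝟙ᵀy = 0`, `‖y‖ = 1` and `f(y) ≤ nβ` has within-group spread `Δ`
satisfying `2Δ²α/n ≤ nβ`, i.e. `Δ² ≤ n²β/(2α)`. -/
theorem stmt_12 (n : ℕ) (hn : 4 ≤ n)
    (W : Matrix (Fin n) (Fin n) ℝ) (hsym : W.IsSymm) (hnn : ∀ i j, 0 ≤ W i j)
    (S T : Finset (Fin n)) (α β : ℝ)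
    (hsep : SepGraph n W S T α β)
    (y : Fin n → ℝ)
    (hsum : ∑ i, y i = 0) (hnorm : ∑ i, (y i) ^ 2 = 1)
    (hloss : ∑ i, ∑ j, W i j * (y i - y j) ^ 2 ≤ n * β)
    (ΔS ΔT Δ : ℝ)
    (hΔS : IsGreatest {d : ℝ | ∃ i ∈ S, ∃ j ∈ S, d = y i - y j} ΔS)
    (hΔT : IsGreatest {d : ℝ | ∃ i ∈ T, ∃ j ∈ T, d = y i - y j} ΔT)
    (hΔ : Δ = max ΔS ΔT) :
    2 * Δ ^ 2 * α / n ≤ n * β ∧ Δ ^ 2 ≤ (n : ℝ) ^ 2 * β / (2 * α) := by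
  obtain ⟨hβ, hβα, hdisj, huniv, hcS, hcT, hPCS, hPCT, hcross⟩ := hsep
  have hα : 0 < α := lt_of_le_of_lt hβ hβα
  have hn0 : (0:ℝ) < n := by positivity
  set f := ∑ i, ∑ j, W i j * (y i - y j) ^ 2 with hf
  have hkey : 2 * Δ ^ 2 * α ≤ n * f := by
    rcases max_cases ΔS ΔT with ⟨hmax, _⟩ | ⟨hmax, _⟩
    · obtain ⟨i, hi, j, hj, hij⟩ := hΔS.1
      rw [hΔ, hmax, hij]
      exact key_est W hnn S α hα hPCS hcS y i j hi hj
    · obtain ⟨i, hi, j, hj, hij⟩ := hΔT.1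
      rw [hΔ, hmax, hij]
      exact key_est W hnn T α hα hPCT hcT y i j hi hj
  have hchain : 2 * Δ ^ 2 * α ≤ n * (n * β) := by
    calc 2 * Δ ^ 2 * α ≤ n * f := hkey
      _ ≤ n * (n * β) := by
          apply mul_le_mul_of_nonneg_left hloss hn0.le
  constructor
  · rw [div_le_iff₀ hn0]
    nlinarith
  · rw [le_div_iff₀ (by positivity)]
    nlinarith
end

section
/- Let G = (X, W) be an (α,β)-separated graph on n ≥ 4 vertices with balanced partition S ∪ T, and suppose α/β > n⁴ (so that n²β/(2α) < 1/(2n)). Then for any minimizer y* of f(y) = Σ_{i,j}W_{i,j}(yᵢ−yⱼ)² subject to 𝟙ᵀy = 0, ‖y‖ = 1, thresholding y* at 0 separates S from T: all entries of y* on one group are strictly negative and on the other strictly positive. -/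

lemma short_path {n : ℕ} {W : Matrix (Fin n) (Fin n) ℝ} {A : Finset (Fin n)} {α : ℝ}
    (h : PathConn n W A α) {i j : Fin n} (hi : i ∈ A) (hj : j ∈ A) :
    ∃ (l : ℕ) (p : ℕ → Fin n), l + 1 ≤ A.card ∧ p 0 = i ∧ p l = j ∧
      (∀ t ≤ l, p t ∈ A) ∧ ∀ t < l, α ≤ W (p t) (p (t + 1)) := by
  classical
  have hP : ∃ l : ℕ, ∃ p : ℕ → Fin n, p 0 = i ∧ p l = j ∧ (∀ t ≤ l, p t ∈ A) ∧
      ∀ t < l, α ≤ W (p t) (p (t + 1)) := h i hi j hj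
  obtain ⟨p, hp0, hpl, hmem, hedge⟩ := Nat.find_spec hP
  set l₀ := Nat.find hP with hl₀def
  by_cases hcard : l₀ + 1 ≤ A.card
  · exact ⟨l₀, p, hcard, hp0, hpl, hmem, hedge⟩
  · exfalso
    push_neg at hcard
    have key : ∀ x y : ℕ, x < y → y ≤ l₀ → p x = p y → False := by
      intro x y hxy hyl heq
      set d := y - x with hd
      set l' := l₀ - d with hl'
      have hd1 : 1 ≤ d := by omega
      have hdl : d ≤ l₀ := by omega
      have hl'lt : l' < l₀ := by omega
      set q : ℕ → Fin n := fun t => if t ≤ x then p t else p (t + d) with hq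
      have hq0 : q 0 = i := by simp [hq, hp0]
      have hql : q l' = j := by
        by_cases hc : l' ≤ x
        · have hxl' : l' = x := by omega
          have hyl0 : y = l₀ := by omega
          simp only [hq, if_pos hc, hxl', heq, if_pos le_rfl, hyl0 ▸ hpl]
        · simp only [hq, if_neg hc]
          have : l' + d = l₀ := by omega
          rw [this, hpl]
      have hqmem : ∀ t ≤ l', q t ∈ A := by
        intro t ht
        by_cases hc : t ≤ x
        · simp only [hq, if_pos hc]; exact hmem t (by omega)
        · simp only [hq, if_neg hc]; exact hmem _ (by omega)
      have hqedge : ∀ t < l', α ≤ W (q t) (q (t + 1)) := by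
        intro t ht
        by_cases h1 : t + 1 ≤ x
        · simp only [hq, if_pos h1, if_pos (by omega : t ≤ x)]
          exact hedge t (by omega)
        · by_cases h2 : t ≤ x
          · have htx : t = x := by omega
            have hylt : y < l₀ := by omega
            have e1 : q t = p y := by simp only [hq, if_pos h2, htx, heq, if_pos le_rfl]
            have e2 : q (t + 1) = p (y + 1) := by
              simp only [hq, if_neg h1]
              congr 1; omega
            rw [e1, e2]; exact hedge y hylt
          · simp only [hq, if_neg h2, if_neg (by omega : ¬ t + 1 ≤ x)]
            have : t + 1 + d = (t + d) + 1 := by omega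
            rw [this]
            exact hedge (t + d) (by omega)
      exact Nat.find_min hP hl'lt ⟨q, hq0, hql, hqmem, hqedge⟩
    have hmaps : ∀ t ∈ Finset.range (l₀ + 1), p t ∈ A := fun t ht =>
      hmem t (by simpa [Nat.lt_succ_iff] using Finset.mem_range.mp ht)
    obtain ⟨x, hx, y, hy, hxy, hpxy⟩ :=
      Finset.exists_ne_map_eq_of_card_lt_of_maps_to (by simpa using hcard) hmaps
    rcases lt_or_gt_of_ne hxy with h | h
    · exact key x y h (by simpa [Nat.lt_succ_iff] using Finset.mem_range.mp hy) hpxy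
    · exact key y x h (by simpa [Nat.lt_succ_iff] using Finset.mem_range.mp hx) hpxy.symm

lemma tele_bound {m : ℕ} {y : Fin m → ℝ} {p : ℕ → Fin m} {l : ℕ} {ε : ℝ}
    (hε : ∀ t < l, |y (p t) - y (p (t + 1))| ≤ ε) :
    |y (p 0) - y (p l)| ≤ l * ε := by
  have h : y (p 0) - y (p l) = ∑ t ∈ Finset.range l, (y (p t) - y (p (t + 1))) :=
    (Finset.sum_range_sub' (fun t => y (p t)) l).symm
  rw [h]
  calc |∑ t ∈ Finset.range l, (y (p t) - y (p (t + 1)))|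
      ≤ ∑ t ∈ Finset.range l, |y (p t) - y (p (t + 1))| := Finset.abs_sum_le_sum_abs _ _
    _ ≤ ∑ _t ∈ Finset.range l, ε := Finset.sum_le_sum fun t ht => hε t (Finset.mem_range.mp ht)
    _ = l * ε := by simp [mul_comm]

set_option maxHeartbeats 1000000 in
/-- For an `(α,β)`-separated graph on `n ≥ 4` vertices with
`α/β > n⁴`, thresholding the constrained minimizer `y*` of the spectral
clustering loss at `0` separates `S` from `T`: the entries of `y*` are strictly
negative on one group and strictly positive on the other. -/
theorem stmt_13 (n : ℕ) (hn : 4 ≤ n)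
    (W : Matrix (Fin n) (Fin n) ℝ) (hsym : W.IsSymm) (hnn : ∀ i j, 0 ≤ W i j)
    (S T : Finset (Fin n)) (α β : ℝ)
    (hsep : SepGraph n W S T α β)
    (hratio : (n : ℝ) ^ 4 < α / β)
    (y : Fin n → ℝ)
    (hsum : ∑ i, y i = 0) (hnorm : ∑ i, (y i) ^ 2 = 1)
    (hopt : ∀ z : Fin n → ℝ, (∑ i, z i = 0) → (∑ i, (z i) ^ 2 = 1) →
      ∑ i, ∑ j, W i j * (y i - y j) ^ 2 ≤ ∑ i, ∑ j, W i j * (z i - z j) ^ 2) :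
    ((∀ i ∈ S, y i < 0) ∧ (∀ j ∈ T, 0 < y j)) ∨
    ((∀ i ∈ S, 0 < y i) ∧ (∀ j ∈ T, y j < 0)) := by
  classical
  obtain ⟨hβ0, hβα, hdisj, hunion, hScard, hTcard, hconnS, hconnT, hcross⟩ := hsep
  have hn0 : 0 < n := by omega
  have hnR : (0 : ℝ) < n := by exact_mod_cast hn0
  have hβpos : 0 < β := by
    rcases hβ0.lt_or_eq with h | h
    · exact h
    · exfalso; rw [← h, div_zero] at hratio; exact absurd hratio (not_lt.mpr (by positivity))
  have hαpos : 0 < α := hβ0.trans_lt hβα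
  have hkey : (n : ℝ) ^ 4 * β < α := (lt_div_iff₀ hβpos).mp hratio
  have hWsymm : ∀ a b, W b a = W a b := fun a b => by
    have := congrFun (congrFun hsym a) b
    simpa [Matrix.transpose_apply] using this
  -- test vector
  set c : ℝ := (Real.sqrt n)⁻¹ with hc
  have hc2 : c ^ 2 = 1 / n := by
    rw [hc, inv_pow, Real.sq_sqrt hnR.le, one_div]
  have hcardeq : T.card = S.card := by omega
  set z : Fin n → ℝ := fun i => if i ∈ S then c else -c with hz
  have hzS : ∀ i ∈ S, z i = c := fun i hi => by simp [hz, hi]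
  have hzT : ∀ i ∈ T, z i = -c := fun i hi => by
    have : i ∉ S := fun h => (Finset.disjoint_left.mp hdisj) h hi
    simp [hz, this]
  have split_sum : ∀ g : Fin n → ℝ, ∑ i, g i = ∑ i ∈ S, g i + ∑ i ∈ T, g i := by
    intro g; rw [← Finset.sum_union hdisj, hunion]
  have hzsum : ∑ i, z i = 0 := by
    rw [split_sum z, Finset.sum_congr rfl hzS, Finset.sum_congr rfl hzT]
    simp [hcardeq]
  have hznorm : ∑ i, (z i) ^ 2 = 1 := by
    have : ∀ i, (z i) ^ 2 = c ^ 2 := by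
      intro i; by_cases hi : i ∈ S <;> simp [hz, hi]
    rw [Finset.sum_congr rfl (fun i _ => this i), Finset.sum_const, hc2]
    simp [Finset.card_univ]
    field_simp
  -- bound on f(z)
  have hfz : ∑ i, ∑ j, W i j * (z i - z j) ^ 2 ≤ 2 * n * β := by
    rw [split_sum (fun i => ∑ j, W i j * (z i - z j) ^ 2)]
    have innersplit : ∀ i, ∑ j, W i j * (z i - z j) ^ 2
        = ∑ j ∈ S, W i j * (z i - z j) ^ 2 + ∑ j ∈ T, W i j * (z i - z j) ^ 2 :=
      fun i => split_sum _
    simp only [innersplit]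
    rw [Finset.sum_add_distrib, Finset.sum_add_distrib]
    have hSS : ∑ i ∈ S, ∑ j ∈ S, W i j * (z i - z j) ^ 2 = 0 := by
      apply Finset.sum_eq_zero; intro i hi; apply Finset.sum_eq_zero; intro j hj
      rw [hzS i hi, hzS j hj]; ring
    have hTT : ∑ i ∈ T, ∑ j ∈ T, W i j * (z i - z j) ^ 2 = 0 := by
      apply Finset.sum_eq_zero; intro i hi; apply Finset.sum_eq_zero; intro j hj
      rw [hzT i hi, hzT j hj]; ring
    have hcsq : ∀ a b : ℝ, a = c → b = -c → (a - b) ^ 2 = 4 / n := by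
      intro a b ha hb; rw [ha, hb]
      have : (c - -c) ^ 2 = 4 * c ^ 2 := by ring
      rw [this, hc2]; ring
    have hST : ∑ i ∈ S, ∑ j ∈ T, W i j * (z i - z j) ^ 2 ≤ n * β := by
      calc ∑ i ∈ S, ∑ j ∈ T, W i j * (z i - z j) ^ 2
          ≤ ∑ _i ∈ S, ∑ _j ∈ T, β * (4 / n) := by
            apply Finset.sum_le_sum; intro i hi; apply Finset.sum_le_sum; intro j hj
            rw [hcsq _ _ (hzS i hi) (hzT j hj)]
            exact mul_le_mul_of_nonneg_right (hcross i hi j hj) (by positivity)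
        _ = S.card * (T.card * (β * (4 / n))) := by
            rw [Finset.sum_const, Finset.sum_const]; simp [mul_assoc]
        _ = n * β := by
            have h1 : (S.card : ℝ) = n / 2 := by
              have : (2 * S.card : ℝ) = n := by exact_mod_cast hScard
              linarith
            have h2 : (T.card : ℝ) = n / 2 := by
              have : (2 * T.card : ℝ) = n := by exact_mod_cast hTcard
              linarith
            rw [h1, h2]; field_simp; ring
    have hTS : ∑ i ∈ T, ∑ j ∈ S, W i j * (z i - z j) ^ 2 ≤ n * β := by
      calc ∑ i ∈ T, ∑ j ∈ S, W i j * (z i - z j) ^ 2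
          ≤ ∑ _i ∈ T, ∑ _j ∈ S, β * (4 / n) := by
            apply Finset.sum_le_sum; intro i hi; apply Finset.sum_le_sum; intro j hj
            have hw : W i j ≤ β := by rw [← hWsymm]; exact hcross j hj i hi
            have : (z i - z j) ^ 2 = 4 / n := by
              rw [hzT i hi, hzS j hj]
              have : (-c - c) ^ 2 = 4 * c ^ 2 := by ring
              rw [this, hc2]; ring
            rw [this]
            exact mul_le_mul_of_nonneg_right hw (by positivity)
        _ = T.card * (S.card * (β * (4 / n))) := by
            rw [Finset.sum_const, Finset.sum_const]; simp [mul_assoc]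
        _ = n * β := by
            have h1 : (S.card : ℝ) = n / 2 := by
              have : (2 * S.card : ℝ) = n := by exact_mod_cast hScard
              linarith
            have h2 : (T.card : ℝ) = n / 2 := by
              have : (2 * T.card : ℝ) = n := by exact_mod_cast hTcard
              linarith
            rw [h1, h2]; field_simp; ring
    linarith [hSS, hTT, hST, hTS]
  have hf : ∑ i, ∑ j, W i j * (y i - y j) ^ 2 ≤ 2 * n * β :=
    le_trans (hopt z hzsum hznorm) hfz
  -- per-edge bound
  have hnn' : ∀ a b, (0:ℝ) ≤ W a b * (y a - y b) ^ 2 :=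
    fun a b => mul_nonneg (hnn a b) (sq_nonneg _)
  have hedgebd : ∀ a b : Fin n, α ≤ W a b → (y a - y b) ^ 2 ≤ n * β / α := by
    intro a b hab
    by_cases heq : a = b
    · subst heq; simp; positivity
    · have hpair : ∑ i ∈ ({a, b} : Finset (Fin n)), ∑ j, W i j * (y i - y j) ^ 2
          ≤ ∑ i, ∑ j, W i j * (y i - y j) ^ 2 :=
        Finset.sum_le_sum_of_subset_of_nonneg (Finset.subset_univ _)
          (fun i _ _ => Finset.sum_nonneg fun j _ => hnn' i j)
      rw [Finset.sum_pair heq] at hpair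
      have ha : W a b * (y a - y b) ^ 2 ≤ ∑ j, W a j * (y a - y j) ^ 2 :=
        Finset.single_le_sum (fun j _ => hnn' a j) (Finset.mem_univ b)
      have hb : W b a * (y b - y a) ^ 2 ≤ ∑ j, W b j * (y b - y j) ^ 2 :=
        Finset.single_le_sum (fun j _ => hnn' b j) (Finset.mem_univ a)
      have hba : W b a = W a b := hWsymm a b
      have hsq : (y b - y a) ^ 2 = (y a - y b) ^ 2 := by ring
      rw [hba, hsq] at hb
      have h2 : 2 * (α * (y a - y b) ^ 2) ≤ 2 * n * β := by
        have := mul_le_mul_of_nonneg_right hab (sq_nonneg (y a - y b))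
        linarith
      rw [le_div_iff₀ hαpos]
      nlinarith
  set ε : ℝ := Real.sqrt (n * β / α) with hε
  have hεnn : 0 ≤ ε := Real.sqrt_nonneg _
  have hstep : ∀ a b : Fin n, α ≤ W a b → |y a - y b| ≤ ε := by
    intro a b hab
    rw [hε, ← Real.sqrt_sq_eq_abs]
    exact Real.sqrt_le_sqrt (hedgebd a b hab)
  have hε2 : ε ^ 2 = n * β / α := Real.sq_sqrt (by positivity)
  -- oscillation bound
  set Δ : ℝ := (S.card - 1 : ℕ) * ε with hΔ
  have hΔnn : 0 ≤ Δ := by positivity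
  have hosc : ∀ (A : Finset (Fin n)), A.card = S.card → PathConn n W A α →
      ∀ i ∈ A, ∀ j ∈ A, |y i - y j| ≤ Δ := by
    intro A hA hconn i hi j hj
    obtain ⟨l, p, hl, hp0, hpl, _, hedge⟩ := short_path hconn hi hj
    have h1 : |y i - y j| ≤ l * ε := by
      rw [← hp0, ← hpl]
      exact tele_bound fun t ht => hstep _ _ (hedge t ht)
    refine h1.trans ?_
    rw [hΔ]
    have : (l : ℝ) ≤ ((S.card - 1 : ℕ) : ℝ) := by
      have : l ≤ S.card - 1 := by omega
      exact_mod_cast this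
    exact mul_le_mul_of_nonneg_right this hεnn
  have hoscS : ∀ i ∈ S, ∀ j ∈ S, |y i - y j| ≤ Δ := hosc S rfl hconnS
  have hoscT : ∀ i ∈ T, ∀ j ∈ T, |y i - y j| ≤ Δ := hosc T hcardeq hconnT
  -- Δ² < 1/(4n)
  have hcardR : (S.card : ℝ) = n / 2 := by
    have : (2 * S.card : ℝ) = n := by exact_mod_cast hScard
    linarith
  have hΔsq : Δ ^ 2 < 1 / (4 * n) := by
    have hle : Δ ≤ (n / 2) * ε := by
      rw [hΔ]
      apply mul_le_mul_of_nonneg_right _ hεnn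
      have : ((S.card - 1 : ℕ) : ℝ) ≤ (S.card : ℝ) := by
        exact_mod_cast Nat.sub_le _ _
      linarith [hcardR]
    have h2 : Δ ^ 2 ≤ ((n : ℝ) / 2) ^ 2 * ε ^ 2 := by
      calc Δ ^ 2 ≤ ((n / 2) * ε) ^ 2 := by
            apply pow_le_pow_left₀ hΔnn hle
        _ = ((n : ℝ) / 2) ^ 2 * ε ^ 2 := by ring
    rw [hε2] at h2
    have h3 : ((n : ℝ) / 2) ^ 2 * (n * β / α) < 1 / (4 * n) := by
      rw [← mul_div_assoc, div_lt_div_iff₀ (by positivity) (by positivity)]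
      nlinarith [hkey, hβpos, hnR]
    linarith
  -- straddle lemma
  have key : ∀ A B : Finset (Fin n), Disjoint A B → A ∪ B = Finset.univ →
      A.card = S.card → B.card = S.card →
      (∀ i ∈ A, ∀ j ∈ A, |y i - y j| ≤ Δ) → (∀ i ∈ B, ∀ j ∈ B, |y i - y j| ≤ Δ) →
      (∃ a ∈ A, 0 ≤ y a) → (∃ a ∈ A, y a ≤ 0) → False := by
    rintro A B hdAB huAB hcA hcB hoA hoB ⟨ap, hap, hyap⟩ ⟨am, ham, hyam⟩
    have hcardpos : 0 < S.card := by omega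
    have hcApos : (0:ℝ) < A.card := by exact_mod_cast (hcA ▸ hcardpos)
    have hcBpos : (0:ℝ) < B.card := by exact_mod_cast (hcB ▸ hcardpos)
    have hA1 : ∀ a ∈ A, |y a| ≤ Δ := by
      intro a ha
      rw [abs_le]
      constructor
      · have := hoA a ha ap hap
        rw [abs_le] at this
        linarith [this.1]
      · have := hoA a ha am ham
        rw [abs_le] at this
        linarith [this.2]
    have hsA : |∑ a ∈ A, y a| ≤ A.card * Δ := by
      calc |∑ a ∈ A, y a| ≤ ∑ a ∈ A, |y a| := Finset.abs_sum_le_sum_abs _ _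
        _ ≤ ∑ _a ∈ A, Δ := Finset.sum_le_sum fun a ha => hA1 a ha
        _ = A.card * Δ := by rw [Finset.sum_const]; simp [mul_comm]
    have hsplit2 : ∑ a ∈ A, y a + ∑ b ∈ B, y b = 0 := by
      rw [← Finset.sum_union hdAB, huAB]; exact hsum
    have hB2 : ∀ b ∈ B, |y b| ≤ 2 * Δ := by
      intro b hb
      have habs : ∀ b' ∈ B, y b' - Δ ≤ y b ∧ y b ≤ y b' + Δ := by
        intro b' hb'
        have := hoB b hb b' hb'
        rw [abs_le] at this
        constructor <;> linarith [this.1, this.2]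
      have hup : (B.card : ℝ) * y b ≤ ∑ b' ∈ B, y b' + B.card * Δ := by
        have : (B.card : ℝ) * y b = ∑ _b' ∈ B, y b := by
          rw [Finset.sum_const]; simp [mul_comm]
        rw [this]
        have : ∑ _b' ∈ B, y b ≤ ∑ b' ∈ B, (y b' + Δ) :=
          Finset.sum_le_sum fun b' hb' => (habs b' hb').2
        rw [Finset.sum_add_distrib, Finset.sum_const] at this
        simpa [mul_comm] using this
      have hdown : ∑ b' ∈ B, y b' - B.card * Δ ≤ (B.card : ℝ) * y b := by
        have h0 : (B.card : ℝ) * y b = ∑ _b' ∈ B, y b := by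
          rw [Finset.sum_const]; simp [mul_comm]
        rw [h0]
        have : ∑ b' ∈ B, (y b' - Δ) ≤ ∑ _b' ∈ B, y b :=
          Finset.sum_le_sum fun b' hb' => (habs b' hb').1
        rw [Finset.sum_sub_distrib, Finset.sum_const] at this
        simpa [mul_comm] using this
      have hsB : |∑ b ∈ B, y b| ≤ B.card * Δ := by
        have : ∑ b ∈ B, y b = - ∑ a ∈ A, y a := by linarith
        rw [this, abs_neg]
        have hcc : (A.card : ℝ) = B.card := by
          exact_mod_cast (by omega : A.card = B.card)
        linarith [hsA, hcc ▸ hsA]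
      rw [abs_le] at hsB ⊢
      constructor
      · have : (B.card : ℝ) * (-(2 * Δ)) ≤ B.card * y b := by linarith [hsB.1, hdown]
        exact le_of_mul_le_mul_left (by linarith [this]) hcBpos
      · have : (B.card : ℝ) * y b ≤ B.card * (2 * Δ) := by linarith [hsB.2, hup]
        exact le_of_mul_le_mul_left this hcBpos
    have hsqA : ∑ a ∈ A, (y a) ^ 2 ≤ A.card * Δ ^ 2 := by
      calc ∑ a ∈ A, (y a) ^ 2 ≤ ∑ _a ∈ A, Δ ^ 2 := by
            apply Finset.sum_le_sum; intro a ha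
            have := hA1 a ha
            nlinarith [abs_nonneg (y a), sq_abs (y a)]
        _ = A.card * Δ ^ 2 := by rw [Finset.sum_const]; simp [mul_comm]
    have hsqB : ∑ b ∈ B, (y b) ^ 2 ≤ B.card * (4 * Δ ^ 2) := by
      calc ∑ b ∈ B, (y b) ^ 2 ≤ ∑ _b ∈ B, 4 * Δ ^ 2 := by
            apply Finset.sum_le_sum; intro b hb
            have := hB2 b hb
            nlinarith [abs_nonneg (y b), sq_abs (y b)]
        _ = B.card * (4 * Δ ^ 2) := by rw [Finset.sum_const]; simp [mul_comm]
    have hone : (1:ℝ) = ∑ a ∈ A, (y a) ^ 2 + ∑ b ∈ B, (y b) ^ 2 := by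
      rw [← Finset.sum_union hdAB, huAB]; exact hnorm.symm
    have hcc : (A.card : ℝ) = n / 2 := by
      rw [show A.card = S.card from hcA]; exact hcardR
    have hcc' : (B.card : ℝ) = n / 2 := by
      rw [show B.card = S.card from hcB]; exact hcardR
    have hfin : (1:ℝ) ≤ (n / 2) * (5 * Δ ^ 2) := by
      rw [hcc] at hsqA; rw [hcc'] at hsqB
      nlinarith [hsqA, hsqB, hone]
    have hnd : (n:ℝ) * Δ ^ 2 < 1 / 4 := by
      have := mul_lt_mul_of_pos_left hΔsq hnR
      have h4 : (n:ℝ) * (1 / (4 * n)) = 1 / 4 := by field_simp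
      linarith [h4 ▸ this]
    nlinarith [hfin, hnd]
  -- final case analysis
  have hSne : S.Nonempty := Finset.card_pos.mp (by omega)
  have hTne : T.Nonempty := Finset.card_pos.mp (by omega)
  have hdisj' : Disjoint T S := hdisj.symm
  have hunion' : T ∪ S = Finset.univ := by rw [Finset.union_comm]; exact hunion
  have hScase : (∀ i ∈ S, y i < 0) ∨ (∀ i ∈ S, 0 < y i) := by
    by_cases h1 : ∃ a ∈ S, 0 ≤ y a
    · right; intro i hi
      by_contra h
      push_neg at h
      exact key S T hdisj hunion rfl hcardeq hoscS hoscT h1 ⟨i, hi, h⟩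
    · left; intro i hi
      push_neg at h1
      exact h1 i hi
  have hTcase : (∀ i ∈ T, y i < 0) ∨ (∀ i ∈ T, 0 < y i) := by
    by_cases h1 : ∃ a ∈ T, 0 ≤ y a
    · right; intro i hi
      by_contra h
      push_neg at h
      exact key T S hdisj' hunion' hcardeq rfl hoscT hoscS h1 ⟨i, hi, h⟩
    · left; intro i hi
      push_neg at h1
      exact h1 i hi
  rcases hScase with hS | hS <;> rcases hTcase with hT | hT
  · exfalso
    have h1 : ∑ i ∈ S, y i < 0 := Finset.sum_neg hS hSne
    have h2 : ∑ i ∈ T, y i < 0 := Finset.sum_neg hT hTne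
    have := split_sum y
    linarith [hsum ▸ this]
  · exact Or.inl ⟨hS, hT⟩
  · exact Or.inr ⟨hS, hT⟩
  · exfalso
    have h1 : 0 < ∑ i ∈ S, y i := Finset.sum_pos hS hSne
    have h2 : 0 < ∑ i ∈ T, y i := Finset.sum_pos hT hTne
    have := split_sum y
    linarith [hsum ▸ this]
end
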